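/- Fix a vertex i ∈ I, finite-dimensional complex vector spaces (𝔍_j)_{j∈I} and W_i, a representation y = (y_h)_{h∈H} of the doubled quiver on (𝔍_j), a linear map g_i : W_i → 𝔍_i, a finite-dimensional complex vector space X, and an endomorphism z_a ∈ End(X) for every loop a ∈ H at i. Assume that the smallest I-graded subspace of ⊕_{j∈I} 𝔍_j that contains ⊕_{j≠i} 𝔍_j and the image of g_i, and is invariant under all the maps y_h (h ∈ H), is the whole space ⊕_{j∈I} 𝔍_j. Then the linear map ψ : (⊕_{h∈H, s(h)=i} Hom(X, 𝔍_{t(h)})) ⊕ Hom(X, W_i) → Hom(X, 𝔍_i) defined by ψ(η, θ) = Σ_{h∈H: s(h)=i} ε(h)·( y_{h̄} ∘ η_h + η_{h̄} ∘ z_h ) + g_i ∘ θ, where the term η_{h̄} ∘ z_h is understood to be 0 unless h is a loop at i, is surjective. -/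

import Mathlib

/-! Doubled quiver setup: a quiver has vertex set `I` and arrow set `Ω` with source and
target maps `s t : Ω → I`.  The doubled quiver has arrow set `H = Ω ⊕ Ω`, the second
copy consisting of the reversed arrows; `bar` is the involution exchanging the copies,
and `eps` is `1` on `Ω` and `−1` on `Ω̄`. -/

/-- The arrow set of the doubled quiver. -/
abbrev DblH (Ω : Type) : Type := Ω ⊕ Ω

/-- Source map of the doubled quiver. -/
def dblSrc {I Ω : Type} (s t : Ω → I) : DblH Ω → I := Sum.elim s t

/-- Target map of the doubled quiver. -/
def dblTgt {I Ω : Type} (s t : Ω → I) : DblH Ω → I := Sum.elim t s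

/-- The involution `h ↦ h̄` of the doubled quiver. -/
def dblBar {Ω : Type} : DblH Ω → DblH Ω := Sum.elim Sum.inr Sum.inl

/-- `ε(h) = 1` for `h ∈ Ω`, `ε(h) = −1` for `h ∈ Ω̄`. -/
def dblEps {Ω : Type} : DblH Ω → ℂ := Sum.elim (fun _ => 1) (fun _ => -1)

theorem dblSrc_bar {I Ω : Type} (s t : Ω → I) (h : DblH Ω) :
    dblSrc s t (dblBar h) = dblTgt s t h := by cases h <;> rfl

theorem dblTgt_bar {I Ω : Type} (s t : Ω → I) (h : DblH Ω) :
    dblTgt s t (dblBar h) = dblSrc s t h := by cases h <;> rfl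

/-- Transport of a linear map along an equality of vertices (cast of the codomain). -/
def cmap {I : Type} (J : I → Type) [∀ j, AddCommGroup (J j)] [∀ j, Module ℂ (J j)]
    {X : Type} [AddCommGroup X] [Module ℂ X] {a b : I} (hab : a = b)
    (f : X →ₗ[ℂ] J a) : X →ₗ[ℂ] J b := hab ▸ f

/-! Let `R` be the range of `ψ` and call `v ∈ 𝔍ᵢ` good if every rank-one map `x ↦ f(x) • v`
lies in `R`. The good vectors, together with all of `𝔍ⱼ` for `j ≠ i`, form an `I`-graded
subspace. It contains the image of `gᵢ` (take `η = 0`), and it is invariant under `y`: for an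
arrow `h` with `t(h) = i`, feeding `ψ` the rank-one map `f(-) • v` in the single slot `h̄` gives
`ε(h̄) f(-) • y_h v`, plus, only when `h` is a loop at `i`, the term `ε(h) (f ∘ z_h)(-) • v`,
which is in `R` as soon as `v` is good. By the generation hypothesis every vector of `𝔍ᵢ` is
good, and since `X` is finite-dimensional the rank-one maps span `Hom(X, 𝔍ᵢ)`. -/

section RankOne

variable {R X M : Type*} [CommRing R] [AddCommGroup X] [Module R X] [AddCommGroup M] [Module R M]

theorem LinearMap.comp_smulRight {N : Type*} [AddCommGroup N] [Module R N] (g : M →ₗ[R] N)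
    (f : Module.Dual R X) (v : M) : g ∘ₗ f.smulRight v = f.smulRight (g v) :=
  LinearMap.ext fun x => g.map_smul (f x) v

theorem Submodule.eq_top_of_smulRight_mem [Module.Finite R X] [Module.Projective R X]
    {S : Submodule R (X →ₗ[R] M)}
    (hS : ∀ (f : Module.Dual R X) (v : M), f.smulRight v ∈ S) : S = ⊤ := by
  refine Submodule.eq_top_iff'.2 fun w => ?_
  obtain ⟨τ, rfl⟩ := dualTensorHom_bijective.surjective w
  induction τ using TensorProduct.induction_on with
  | zero => simp
  | tmul f v => exact hS f v
  | add τ σ hτ hσ => simpa using add_mem hτ hσ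

end RankOne

section Cast

variable {I : Type} (J : I → Type) [∀ j, AddCommGroup (J j)] [∀ j, Module ℂ (J j)]
  {X : Type} [AddCommGroup X] [Module ℂ X] {a b c : I}

@[simp] theorem cmap_rfl (e : a = a) (f : X →ₗ[ℂ] J a) : cmap J e f = f := rfl

@[simp] theorem cmap_zero (e : a = b) : cmap J e (0 : X →ₗ[ℂ] J a) = 0 := by subst e; rfl

theorem cmap_add (e : a = b) (f g : X →ₗ[ℂ] J a) :
    cmap J e (f + g) = cmap J e f + cmap J e g := by subst e; rfl

theorem cmap_smul (e : a = b) (r : ℂ) (f : X →ₗ[ℂ] J a) :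
    cmap J e (r • f) = r • cmap J e f := by subst e; rfl

theorem cmap_cmap (e₁ : a = b) (e₂ : b = c) (f : X →ₗ[ℂ] J a) :
    cmap J e₂ (cmap J e₁ f) = cmap J (e₁.trans e₂) f := by subst e₁ e₂; rfl

theorem cmap_comp {Y : Type} [AddCommGroup Y] [Module ℂ Y] (e : a = b) (f : X →ₗ[ℂ] J a)
    (g : Y →ₗ[ℂ] X) : cmap J e f ∘ₗ g = cmap J e (f ∘ₗ g) := by subst e; rfl

end Cast

section RankOneLocus

variable {I : Type} (J : I → Type) [∀ j, AddCommGroup (J j)] [∀ j, Module ℂ (J j)]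
  {X : Type} [AddCommGroup X] [Module ℂ X] (i : I) (R : Submodule ℂ (X →ₗ[ℂ] J i))

/-- Quantifying over proofs of `j = i` makes this the full space `𝔍ⱼ` for `j ≠ i`. -/
def rankOneLocus (j : I) : Submodule ℂ (J j) where
  carrier := {v | ∀ (e : j = i) (f : Module.Dual ℂ X), cmap J e (f.smulRight v) ∈ R}
  add_mem' {v w} hv hw e f := by
    rw [show f.smulRight (v + w) = f.smulRight v + f.smulRight w from
      map_add (LinearMap.smulRightₗ f) v w, cmap_add]
    exact add_mem (hv e f) (hw e f)
  zero_mem' e f := by simp [LinearMap.smulRight_zero]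
  smul_mem' r v hv e f := by
    rw [show f.smulRight (r • v) = r • f.smulRight v from
      map_smul (LinearMap.smulRightₗ f) r v, cmap_smul]
    exact R.smul_mem r (hv e f)

theorem rankOneLocus_eq_top_of_ne {j : I} (hj : j ≠ i) : rankOneLocus J i R j = ⊤ :=
  eq_top_iff.2 fun _ _ e => absurd e hj

theorem eq_top_of_rankOneLocus_eq_top [FiniteDimensional ℂ X] (hR : rankOneLocus J i R i = ⊤) :
    R = ⊤ :=
  Submodule.eq_top_of_smulRight_mem fun f v =>
    (hR ▸ Submodule.mem_top : v ∈ rankOneLocus J i R i) rfl f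

end RankOneLocus

theorem dblBar_dblBar {Ω : Type} (h : DblH Ω) : dblBar (dblBar h) = h := by cases h <;> rfl

theorem dblBar_injective {Ω : Type} : Function.Injective (dblBar (Ω := Ω)) :=
  Function.LeftInverse.injective dblBar_dblBar

theorem dblBar_ne_self {Ω : Type} (h : DblH Ω) : dblBar h ≠ h := by cases h <;> simp [dblBar]

theorem dblEps_ne_zero {Ω : Type} (h : DblH Ω) : dblEps h ≠ 0 := by cases h <;> simp [dblEps]

section Psi

variable {I Ω : Type} [Fintype Ω] [DecidableEq I] (s t : Ω → I)
  (J : I → Type) [∀ j, AddCommGroup (J j)] [∀ j, Module ℂ (J j)] (i : I)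
  {W : Type} [AddCommGroup W] [Module ℂ W] {X : Type} [AddCommGroup X] [Module ℂ X]
  (y : ∀ h : DblH Ω, J (dblSrc s t h) →ₗ[ℂ] J (dblTgt s t h)) (g : W →ₗ[ℂ] J i)
  (z : DblH Ω → Module.End ℂ X)

def psi : ((∀ h : DblH Ω, X →ₗ[ℂ] J (dblTgt s t h)) × (X →ₗ[ℂ] W)) →ₗ[ℂ] (X →ₗ[ℂ] J i) where
  toFun p := (∑ h : DblH Ω,
      if c : dblSrc s t h = i then
        dblEps h •
          cmap J ((dblTgt_bar s t h).trans c)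
            ((y (dblBar h)) ∘ₗ (cmap J (dblSrc_bar s t h).symm (p.1 h)) +
              (if dblTgt s t h = i then (p.1 (dblBar h)) ∘ₗ (z h) else 0))
      else 0) + g ∘ₗ p.2
  map_add' p q := by
    rw [add_add_add_comm, ← Finset.sum_add_distrib]
    congr 1
    · refine Finset.sum_congr rfl fun h _ => ?_
      split_ifs <;> simp only [Prod.fst_add, Pi.add_apply, cmap_add, LinearMap.comp_add,
        LinearMap.add_comp, add_zero, smul_add, add_add_add_comm]
    · exact LinearMap.comp_add _ _ _
  map_smul' r p := by
    rw [RingHom.id_apply, smul_add, Finset.smul_sum]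
    congr 1
    · refine Finset.sum_congr rfl fun h _ => ?_
      split_ifs <;> simp only [Prod.smul_fst, Pi.smul_apply, cmap_smul, LinearMap.comp_smul,
        LinearMap.smul_comp, smul_zero, ← smul_add, add_zero, smul_comm r]
    · exact LinearMap.comp_smul _ _ _

theorem psi_zero_fst (θ : X →ₗ[ℂ] W) : psi s t J i y g z (0, θ) = g ∘ₗ θ := by
  simp [psi]

theorem psi_single_bar [DecidableEq Ω] (h : DblH Ω) (ci : dblTgt s t h = i)
    (u : X →ₗ[ℂ] J (dblSrc s t h)) :
    psi s t J i y g z (Pi.single (dblBar h) (cmap J (dblTgt_bar s t h).symm u), 0) =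
      dblEps (dblBar h) • cmap J ci (y h ∘ₗ u) +
        if cs : dblSrc s t h = i then dblEps h • cmap J cs (u ∘ₗ z h) else 0 := by
  subst ci
  simp only [psi, LinearMap.coe_mk, AddHom.coe_mk, LinearMap.comp_zero, add_zero]
  rw [Fintype.sum_eq_add (dblBar h) h (dblBar_ne_self h)]
  · rw [dif_pos (dblSrc_bar s t h), Pi.single_eq_same, Pi.single_eq_of_ne (dblBar_ne_self _),
      Pi.single_eq_of_ne (dblBar_ne_self h).symm]
    simp only [cmap_zero, LinearMap.comp_zero, LinearMap.zero_comp, zero_add, ite_self, add_zero,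
      cmap_rfl, if_true, cmap_comp, cmap_cmap]
    congr 2
    cases h <;> rfl
  · rintro k ⟨hk, hk'⟩
    have hk'' : dblBar k ≠ dblBar h := fun e => hk' (dblBar_injective e)
    simp [Pi.single_eq_of_ne hk, Pi.single_eq_of_ne hk'']

theorem range_le_rankOneLocus_psi :
    LinearMap.range g ≤ rankOneLocus J i (LinearMap.range (psi s t J i y g z)) i := by
  rintro _ ⟨w, rfl⟩ e f
  exact ⟨(0, f.smulRight w), by rw [psi_zero_fst, LinearMap.comp_smulRight, cmap_rfl]⟩

theorem rankOneLocus_psi_invariant (h : DblH Ω) {v : J (dblSrc s t h)}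
    (hv : v ∈ rankOneLocus J i (LinearMap.range (psi s t J i y g z)) (dblSrc s t h)) :
    y h v ∈ rankOneLocus J i (LinearMap.range (psi s t J i y g z)) (dblTgt s t h) := by
  classical
  intro ci f
  have hψ := psi_single_bar s t J i y g z h ci (f.smulRight v)
  rw [LinearMap.comp_smulRight] at hψ
  have hloop : (if cs : dblSrc s t h = i then dblEps h • cmap J cs (f.smulRight v ∘ₗ z h)
      else 0) ∈ LinearMap.range (psi s t J i y g z) := by
    split_ifs with cs
    · exact Submodule.smul_mem _ _ (hv cs (f ∘ₗ z h))
    · exact zero_mem _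
  refine (Submodule.smul_mem_iff _ (dblEps_ne_zero (dblBar h))).1 ?_
  rw [eq_sub_of_add_eq hψ.symm]
  exact sub_mem (LinearMap.mem_range_self _ _) hloop

end Psi

theorem psi_surjective_general
    (I Ω : Type) [Fintype Ω] [DecidableEq I]
    (s t : Ω → I)
    (J : I → Type) [∀ j, AddCommGroup (J j)] [∀ j, Module ℂ (J j)]
    (i : I)
    (Wi : Type) [AddCommGroup Wi] [Module ℂ Wi]
    (y : ∀ h : DblH Ω, J (dblSrc s t h) →ₗ[ℂ] J (dblTgt s t h))
    (gi : Wi →ₗ[ℂ] J i)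
    (X : Type) [AddCommGroup X] [Module ℂ X] [FiniteDimensional ℂ X]
    (z : DblH Ω → Module.End ℂ X)
    (hgen : ∀ S : ∀ j, Submodule ℂ (J j),
      (∀ j, j ≠ i → S j = ⊤) →
      LinearMap.range gi ≤ S i →
      (∀ h : DblH Ω, ∀ v ∈ S (dblSrc s t h), y h v ∈ S (dblTgt s t h)) →
      S i = ⊤) :
    ∀ w : X →ₗ[ℂ] J i,
      ∃ (η : ∀ h : DblH Ω, X →ₗ[ℂ] J (dblTgt s t h)) (θ : X →ₗ[ℂ] Wi),
        (∑ h : DblH Ω,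
          if c : dblSrc s t h = i then
            dblEps h •
              cmap J ((dblTgt_bar s t h).trans c)
                ((y (dblBar h)) ∘ₗ (cmap J (dblSrc_bar s t h).symm (η h)) +
                  (if dblTgt s t h = i then (η (dblBar h)) ∘ₗ (z h) else 0))
          else 0) + gi ∘ₗ θ = w := by
  intro w
  have hsurj : LinearMap.range (psi s t J i y gi z) = ⊤ :=
    eq_top_of_rankOneLocus_eq_top J i _ <| hgen _
      (fun _ hj => rankOneLocus_eq_top_of_ne J i _ hj)
      (range_le_rankOneLocus_psi s t J i y gi z)
      (fun h _ hv => rankOneLocus_psi_invariant s t J i y gi z h hv)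
  obtain ⟨⟨η, θ⟩, hψ⟩ := LinearMap.range_eq_top.1 hsurj w
  exact ⟨η, θ, hψ⟩

/-- if the smallest `I`-graded subspace of `⊕ⱼ 𝔍ⱼ` containing `⊕_{j≠i} 𝔍ⱼ`
and the image of `gᵢ : Wᵢ → 𝔍ᵢ`, and invariant under the representation `y`, is
everything, then the map
`ψ(η,θ) = Σ_{h : s(h)=i} ε(h)·(y_{h̄} ∘ η_h + η_{h̄} ∘ z_h) + gᵢ ∘ θ` (the term
`η_{h̄} ∘ z_h` present only for loops at `i`) is surjective onto `Hom(X, 𝔍ᵢ)`. -/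
theorem psi_surjective
    (I Ω : Type) [Fintype I] [Fintype Ω] [DecidableEq I]
    (s t : Ω → I)
    (J : I → Type) [∀ j, AddCommGroup (J j)] [∀ j, Module ℂ (J j)]
    [∀ j, FiniteDimensional ℂ (J j)]
    (i : I)
    (Wi : Type) [AddCommGroup Wi] [Module ℂ Wi] [FiniteDimensional ℂ Wi]
    (y : ∀ h : DblH Ω, J (dblSrc s t h) →ₗ[ℂ] J (dblTgt s t h))
    (gi : Wi →ₗ[ℂ] J i)
    (X : Type) [AddCommGroup X] [Module ℂ X] [FiniteDimensional ℂ X]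
    (z : DblH Ω → Module.End ℂ X)
    (hgen : ∀ S : ∀ j, Submodule ℂ (J j),
      (∀ j, j ≠ i → S j = ⊤) →
      LinearMap.range gi ≤ S i →
      (∀ h : DblH Ω, ∀ v ∈ S (dblSrc s t h), y h v ∈ S (dblTgt s t h)) →
      S i = ⊤) :
    ∀ w : X →ₗ[ℂ] J i,
      ∃ (η : ∀ h : DblH Ω, X →ₗ[ℂ] J (dblTgt s t h)) (θ : X →ₗ[ℂ] Wi),
        (∑ h : DblH Ω,
          if c : dblSrc s t h = i then
            dblEps h •
              cmap J ((dblTgt_bar s t h).trans c)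
                ((y (dblBar h)) ∘ₗ (cmap J (dblSrc_bar s t h).symm (η h)) +
                  (if dblTgt s t h = i then (η (dblBar h)) ∘ₗ (z h) else 0))
          else 0) + gi ∘ₗ θ = w :=
  psi_surjective_general I Ω s t J i Wi y gi X z hgen
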